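/- For all real parameters m > 0, k > 0, γ̄ > 0, the mean of the fdRLoS instantaneous SNR equals the average SNR: ∫₀^∞ γ · f(γ) dγ = γ̄, where f(γ) = ∫₀^∞ f(γ|x) e^{−x} dx. -/

import Mathlib

open MeasureTheory Set

/-- Pochhammer symbol (rising factorial) `(m)_i = m(m+1)⋯(m+i−1)`. -/
noncomputable def poch (m : ℝ) (i : ℕ) : ℝ := ∏ j ∈ Finset.range i, (m + j)

/-- `n`-th harmonic number `H_n = ∑_{j=1}^n 1/j` (with `H_0 = 0`). -/
noncomputable def harmonicR (n : ℕ) : ℝ := ∑ j ∈ Finset.range n, 1 / ((j : ℝ) + 1)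

/-- Kummer confluent hypergeometric function `₁F₁(m, 1, z) = ∑_{i=0}^∞ ((m)_i/(i!)²) z^i`. -/
noncomputable def kummerM (m z : ℝ) : ℝ :=
  ∑' i : ℕ, poch m i / ((Nat.factorial i : ℝ) ^ 2) * z ^ i

/-- Kummer confluent hypergeometric function of the second kind
`U(a, b, z) = (1/Γ(a)) ∫₀^∞ e^{−zt} t^{a−1} (1+t)^{b−a−1} dt`. -/
noncomputable def kummerU (a b z : ℝ) : ℝ :=
  (1 / Real.Gamma a) *
    ∫ t in Ioi (0 : ℝ), Real.exp (-z * t) * t ^ (a - 1) * (1 + t) ^ (b - a - 1)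

/-- Conditional SNR density of the fdRLoS channel,
`f(γ|x)` with `k_x = k/x`, `γ̄_x = ((k+x)/(k+1))·γ̄`. -/
noncomputable def condPdf (m k γb x γ : ℝ) : ℝ :=
  (m ^ m * (1 + k / x)) / ((m + k / x) ^ m * ((k + x) / (k + 1) * γb)) *
    Real.exp (-((1 + k / x) / ((k + x) / (k + 1) * γb)) * γ) *
    kummerM m ((k / x) * (1 + k / x) / (k / x + m) * (γ / ((k + x) / (k + 1) * γb)))

/-- Unconditional SNR density of the fdRLoS channel, `f(γ) = ∫₀^∞ f(γ|x) e^{−x} dx`. -/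
noncomputable def pdfSNR (m k γb γ : ℝ) : ℝ :=
  ∫ x in Ioi (0 : ℝ), condPdf m k γb x γ * Real.exp (-x)



section fdRLoSAux

lemma poch_succ (m : ℝ) (i : ℕ) : poch m (i + 1) = poch m i * (m + i) :=
  Finset.prod_range_succ _ _

lemma poch_pos' {m : ℝ} (hm : 0 < m) (i : ℕ) : 0 < poch m i :=
  Finset.prod_pos fun j _ => by positivity

lemma poch_le {m : ℝ} (hm : 0 < m) (i : ℕ) :
    poch m i ≤ (max m 1) ^ i * (Nat.factorial i : ℝ) := by
  have h : ∀ j ∈ Finset.range i, m + (j : ℝ) ≤ (max m 1) * ((j : ℝ) + 1) := by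
    intro j _
    have h1 : m ≤ max m 1 := le_max_left _ _
    have h2 : (j : ℝ) ≤ max m 1 * j := le_mul_of_one_le_left (by positivity) (le_max_right _ _)
    nlinarith
  calc poch m i ≤ ∏ j ∈ Finset.range i, ((max m 1) * ((j : ℝ) + 1)) :=
        Finset.prod_le_prod (fun j _ => by positivity) h
    _ = (max m 1) ^ i * (Nat.factorial i : ℝ) := by
        rw [Finset.prod_mul_distrib, Finset.prod_const, Finset.card_range]
        congr 1
        rw [← Finset.prod_range_add_one_eq_factorial i]
        push_cast
        ring

lemma hasSum_exp_real (z : ℝ) : HasSum (fun n => z ^ n / (Nat.factorial n : ℝ)) (Real.exp z) := by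
  rw [Real.exp_eq_exp_ℝ]
  exact NormedSpace.expSeries_div_hasSum_exp z

lemma summable_kummer {m : ℝ} (hm : 0 < m) (z : ℝ) :
    Summable (fun i => poch m i / ((Nat.factorial i : ℝ)) ^ 2 * z ^ i) := by
  have hM : (0:ℝ) < max m 1 := lt_of_lt_of_le one_pos (le_max_right _ _)
  apply Summable.of_abs
  apply Summable.of_nonneg_of_le (fun i => abs_nonneg _)
    (f := fun i => (max m 1 * |z|) ^ i / (Nat.factorial i : ℝ))
  · intro i
    have hfac : (0:ℝ) < (Nat.factorial i : ℝ) := by positivity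
    rw [abs_mul, abs_div, abs_pow, abs_pow, abs_of_pos (poch_pos' hm i),
      abs_of_pos (by positivity : (0:ℝ) < (Nat.factorial i : ℝ))]
    rw [mul_pow, div_mul_eq_mul_div, div_le_div_iff₀ (by positivity) hfac]
    have hple := poch_le hm i
    calc poch m i * |z| ^ i * (Nat.factorial i : ℝ)
        ≤ ((max m 1) ^ i * (Nat.factorial i : ℝ)) * |z| ^ i * (Nat.factorial i : ℝ) := by
          exact mul_le_mul_of_nonneg_right
            (mul_le_mul_of_nonneg_right hple (by positivity)) hfac.le
      _ = (max m 1) ^ i * |z| ^ i * (Nat.factorial i : ℝ) ^ 2 := by ring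
  · exact Real.summable_pow_div_factorial _

lemma hasSum_exp_aux (z : ℝ) :
    HasSum (fun i : ℕ => ((i : ℝ) + 1) * z ^ i / (Nat.factorial i : ℝ)) ((1 + z) * Real.exp z) := by
  have h1 := hasSum_exp_real z
  have h3 : HasSum (fun i : ℕ => z * (z ^ i / (Nat.factorial i : ℝ))) (z * Real.exp z) :=
    h1.mul_left z
  set f : ℕ → ℝ := fun i => (i : ℝ) * z ^ i / (Nat.factorial i : ℝ) with hf
  have hshift : (fun i : ℕ => f (i + 1)) = fun i : ℕ => z * (z ^ i / (Nat.factorial i : ℝ)) := by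
    funext i
    simp only [hf, Nat.factorial_succ, pow_succ]
    have : (Nat.factorial i : ℝ) ≠ 0 := by positivity
    push_cast
    field_simp
  have h2 : HasSum f (z * Real.exp z) := by
    rw [← hasSum_nat_add_iff' 1]
    have he : z * Real.exp z - ∑ i ∈ Finset.range 1, f i = z * Real.exp z := by
      simp [hf]
    rw [he, hshift]
    exact h3
  have hsum := h1.add h2
  have he2 : (fun i : ℕ => z ^ i / (Nat.factorial i : ℝ) + f i) =
      fun i : ℕ => ((i : ℝ) + 1) * z ^ i / (Nat.factorial i : ℝ) := by
    funext i
    simp only [hf]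
    have : (Nat.factorial i : ℝ) ≠ 0 := by positivity
    field_simp
    ring
  rw [he2] at hsum
  convert hsum using 1
  ring

lemma Gamma_poch {m : ℝ} (hm : 0 < m) (i : ℕ) :
    Real.Gamma (m + i) = poch m i * Real.Gamma m := by
  induction i with
  | zero => simp [poch]
  | succ n ih =>
    have hne : m + (n : ℝ) ≠ 0 := by positivity
    have : m + ((n : ℕ) + 1 : ℕ) = (m + n) + 1 := by push_cast; ring
    rw [this, Real.Gamma_add_one hne, ih, poch_succ]
    ring

lemma lintegral_rpow_exp {p r : ℝ} (hp : 0 < p) (hr : 0 < r) :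
    ∫⁻ t in Ioi (0:ℝ), ENNReal.ofReal (t ^ (p - 1) * Real.exp (-(r * t))) =
      ENNReal.ofReal ((1 / r) ^ p * Real.Gamma p) := by
  have hint : IntegrableOn (fun t : ℝ => t ^ (p - 1) * Real.exp (-(r * t))) (Ioi 0) := by
    have h0 : IntegrableOn (fun x : ℝ => Real.exp (-x) * x ^ (p - 1)) (Ioi 0) :=
      Real.GammaIntegral_convergent hp
    have h1 : IntegrableOn (fun t : ℝ => Real.exp (-(r * t)) * (r * t) ^ (p - 1)) (Ioi 0) := by
      have := (integrableOn_Ioi_comp_mul_left_iff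
        (fun x : ℝ => Real.exp (-x) * x ^ (p - 1)) 0 hr).mpr (by rw [mul_zero]; exact h0)
      exact this
    have h2 : IntegrableOn (fun t : ℝ => r ^ (p-1) * (t ^ (p - 1) * Real.exp (-(r * t)))) (Ioi 0) := by
      apply h1.congr_fun ?_ measurableSet_Ioi
      intro t ht
      simp only
      rw [Real.mul_rpow hr.le (le_of_lt ht)]
      ring
    have h3 : IntegrableOn
        (fun t : ℝ => (r ^ (p-1))⁻¹ * (r ^ (p-1) * (t ^ (p - 1) * Real.exp (-(r * t))))) (Ioi 0) :=
      h2.const_mul _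
    apply h3.congr_fun ?_ measurableSet_Ioi
    intro t ht
    have hrp : (r:ℝ) ^ (p-1) ≠ 0 := by positivity
    simp only
    field_simp
  rw [← ofReal_integral_eq_lintegral_ofReal hint]
  · rw [Real.integral_rpow_mul_exp_neg_mul_Ioi hp hr]
  · filter_upwards [self_mem_ae_restrict measurableSet_Ioi] with t ht
    have : (0:ℝ) < t := ht
    positivity

lemma lintegral_pow_exp {a : ℝ} (n : ℕ) (ha : 0 < a) :
    ∫⁻ t in Ioi (0:ℝ), ENNReal.ofReal (t ^ n * Real.exp (-(a * t))) =
      ENNReal.ofReal ((Nat.factorial n : ℝ) / a ^ (n + 1)) := by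
  have h := lintegral_rpow_exp (p := (n : ℝ) + 1) (by positivity) ha
  have he : ∀ t : ℝ, t ^ ((n : ℝ) + 1 - 1) = t ^ n := by
    intro t
    rw [add_sub_cancel_right, Real.rpow_natCast]
  simp_rw [he] at h
  rw [h]
  congr 1
  rw [show ((n : ℝ) + 1) = ((n + 1 : ℕ) : ℝ) by push_cast; ring, Real.rpow_natCast]
  push_cast
  rw [Real.Gamma_nat_eq_factorial]
  have : a ^ (n+1) ≠ 0 := by positivity
  rw [div_pow]
  field_simp
  simp

lemma measurable_rpow_exp (q r : ℝ) :
    Measurable (fun s : ℝ => s ^ q * Real.exp (-(r * s))) :=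
  (measurable_id.pow_const q).mul (Real.measurable_exp.comp (measurable_id.const_mul r).neg)

lemma tsum_poch_geom {m t : ℝ} (hm : 0 < m) (ht0 : 0 ≤ t) (ht1 : t < 1) :
    ∑' i : ℕ, ENNReal.ofReal (poch m i * ((i:ℝ)+1) / (Nat.factorial i : ℝ) * t ^ i)
      = ENNReal.ofReal ((1-t) ^ (-m) + m * t * (1-t) ^ (-(m+1))) := by
  have hΓ : 0 < Real.Gamma m := Real.Gamma_pos_of_pos hm
  have h1t : 0 < 1 - t := by linarith
  -- constants
  set c : ℕ → ℝ := fun i => ((i:ℝ)+1) * t ^ i / ((Nat.factorial i : ℝ) * Real.Gamma m) with hc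
  have hcnn : ∀ i, 0 ≤ c i := fun i => by
    have : (0:ℝ) < (Nat.factorial i : ℝ) := by positivity
    positivity
  -- step 1 : each term as an integral
  have key : ∀ i : ℕ,
      (∫⁻ s in Ioi (0:ℝ), ENNReal.ofReal (c i * (s ^ (m + (i:ℝ) - 1) * Real.exp (-(1 * s))))) =
      ENNReal.ofReal (poch m i * ((i:ℝ)+1) / (Nat.factorial i : ℝ) * t ^ i) := by
    intro i
    have hmi : (0:ℝ) < m + (i:ℝ) := by positivity
    have hmeas := ((measurable_rpow_exp (m + (i:ℝ) - 1) 1).const_mul (c i)).ennreal_ofReal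
    calc ∫⁻ s in Ioi (0:ℝ), ENNReal.ofReal (c i * (s ^ (m + (i:ℝ) - 1) * Real.exp (-(1 * s))))
        = ENNReal.ofReal (c i) *
            ∫⁻ s in Ioi (0:ℝ), ENNReal.ofReal (s ^ (m + (i:ℝ) - 1) * Real.exp (-(1 * s))) := by
          rw [← lintegral_const_mul' _ _ ENNReal.ofReal_ne_top]
          congr 1
          funext s
          rw [ENNReal.ofReal_mul (hcnn i)]
      _ = ENNReal.ofReal (c i) * ENNReal.ofReal ((1/1) ^ (m + (i:ℝ)) * Real.Gamma (m + i)) := by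
          rw [lintegral_rpow_exp hmi one_pos]
      _ = ENNReal.ofReal (poch m i * ((i:ℝ)+1) / (Nat.factorial i : ℝ) * t ^ i) := by
          rw [← ENNReal.ofReal_mul (hcnn i)]
          congr 1
          rw [Gamma_poch hm i]
          have hf : (0:ℝ) < (Nat.factorial i : ℝ) := by positivity
          rw [one_div_one, Real.one_rpow]
          simp only [hc]
          field_simp [hc]
  rw [tsum_congr (fun i => (key i).symm)]
  -- step 2 : swap tsum and lintegral
  rw [← lintegral_tsum (f := fun (i : ℕ) (s : ℝ) =>
      ENNReal.ofReal (c i * (s ^ (m + (i:ℝ) - 1) * Real.exp (-(1 * s)))))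
    (fun i =>
    (((measurable_rpow_exp (m + (i:ℝ) - 1) 1).const_mul (c i)).ennreal_ofReal).aemeasurable)]
  -- step 3 : pointwise evaluation of the series
  have hpt : ∀ s ∈ Ioi (0:ℝ),
      ∑' i : ℕ, ENNReal.ofReal (c i * (s ^ (m + (i:ℝ) - 1) * Real.exp (-(1 * s)))) =
      ENNReal.ofReal ((1/Real.Gamma m) * (s ^ (m-1) * Real.exp (-((1-t) * s)))
        + (t/Real.Gamma m) * (s ^ ((m+1)-1) * Real.exp (-((1-t) * s)))) := by
    intro s hs
    have hs0 : (0:ℝ) < s := hs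
    set A : ℝ := s ^ (m-1) * Real.exp (-s) / Real.Gamma m with hA
    have hAnn : 0 ≤ A := by positivity
    have hterm : ∀ i : ℕ, c i * (s ^ (m + (i:ℝ) - 1) * Real.exp (-(1 * s)))
        = A * (((i:ℝ)+1) * (t*s) ^ i / (Nat.factorial i : ℝ)) := by
      intro i
      have hsplit : s ^ (m + (i:ℝ) - 1) = s ^ (m - 1) * s ^ i := by
        rw [show m + (i:ℝ) - 1 = (m - 1) + (i:ℝ) by ring, Real.rpow_add hs0,
          Real.rpow_natCast]
      have hf : (0:ℝ) < (Nat.factorial i : ℝ) := by positivity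
      rw [hsplit, hc, hA]
      simp only [one_mul]
      field_simp
      ring
    simp_rw [hterm]
    have hsum : HasSum (fun i : ℕ => A * (((i:ℝ)+1) * (t*s) ^ i / (Nat.factorial i : ℝ)))
        (A * ((1 + t*s) * Real.exp (t*s))) := (hasSum_exp_aux (t*s)).mul_left A
    rw [← ENNReal.ofReal_tsum_of_nonneg (fun i => by positivity) hsum.summable,
      hsum.tsum_eq]
    congr 1
    have hes : Real.exp (-s) * Real.exp (t*s) = Real.exp (-((1-t)*s)) := by
      rw [← Real.exp_add]; ring_nf
    have hsm : s ^ ((m+1)-1) = s ^ (m-1) * s := by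
      rw [show (m+1)-1 = (m-1) + 1 by ring, Real.rpow_add hs0, Real.rpow_one]
    rw [hA, hsm]
    field_simp
    rw [mul_comm s t, mul_comm s (1 - t)]
    exact hes
  rw [setLIntegral_congr_fun measurableSet_Ioi hpt]
  -- step 4 : evaluate the two Gamma integrals
  have hsplit : ∫⁻ s in Ioi (0:ℝ), ENNReal.ofReal ((1/Real.Gamma m) * (s ^ (m-1) * Real.exp (-((1-t) * s)))
        + (t/Real.Gamma m) * (s ^ ((m+1)-1) * Real.exp (-((1-t) * s))))
      = (∫⁻ s in Ioi (0:ℝ), ENNReal.ofReal ((1/Real.Gamma m) * (s ^ (m-1) * Real.exp (-((1-t) * s)))))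
        + ∫⁻ s in Ioi (0:ℝ), ENNReal.ofReal ((t/Real.Gamma m) * (s ^ ((m+1)-1) * Real.exp (-((1-t) * s)))) := by
    rw [← lintegral_add_left (((measurable_rpow_exp (m-1) (1-t)).const_mul _).ennreal_ofReal)]
    apply setLIntegral_congr_fun measurableSet_Ioi
    intro s hs
    have hs0 : (0:ℝ) < s := hs
    dsimp only
    rw [ENNReal.ofReal_add (by positivity) (by positivity)]
  rw [hsplit]
  have e1 : ∫⁻ s in Ioi (0:ℝ), ENNReal.ofReal ((1/Real.Gamma m) * (s ^ (m-1) * Real.exp (-((1-t) * s))))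
      = ENNReal.ofReal (1/Real.Gamma m) * ENNReal.ofReal ((1/(1-t)) ^ m * Real.Gamma m) := by
    simp_rw [ENNReal.ofReal_mul (by positivity : (0:ℝ) ≤ 1/Real.Gamma m)]
    rw [lintegral_const_mul' _ _ ENNReal.ofReal_ne_top, lintegral_rpow_exp hm h1t]
  have e2 : ∫⁻ s in Ioi (0:ℝ), ENNReal.ofReal ((t/Real.Gamma m) * (s ^ ((m+1)-1) * Real.exp (-((1-t) * s))))
      = ENNReal.ofReal (t/Real.Gamma m) * ENNReal.ofReal ((1/(1-t)) ^ (m+1) * Real.Gamma (m+1)) := by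
    simp_rw [ENNReal.ofReal_mul (by positivity : (0:ℝ) ≤ t/Real.Gamma m)]
    rw [lintegral_const_mul' _ _ ENNReal.ofReal_ne_top, lintegral_rpow_exp (by positivity) h1t]
  rw [e1, e2, ← ENNReal.ofReal_mul (by positivity), ← ENNReal.ofReal_mul (by positivity),
    ← ENNReal.ofReal_add (by positivity) (by positivity)]
  congr 1
  rw [Real.Gamma_add_one hm.ne']
  simp only [one_div]
  rw [Real.inv_rpow h1t.le, Real.inv_rpow h1t.le, ← Real.rpow_neg h1t.le,
    ← Real.rpow_neg h1t.le]
  field_simp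

lemma condMean {m a b C : ℝ} (hm : 0 < m) (hC : 0 ≤ C) (ha : 0 < a) (hb : 0 < b)
    (hba : b < a) :
    ∫⁻ γ in Ioi (0:ℝ), ENNReal.ofReal (γ * (C * Real.exp (-(a*γ)) * kummerM m (b*γ)))
      = ENNReal.ofReal (C/a^2 * ((1-b/a) ^ (-m) + m*(b/a)*(1-b/a) ^ (-(m+1)))) := by
  have hfa : ∀ i : ℕ, (0:ℝ) < (Nat.factorial i : ℝ) := fun i => by positivity
  have hterm_nn : ∀ (γ : ℝ), 0 < γ → ∀ i : ℕ,
      0 ≤ (C * (poch m i / ((Nat.factorial i : ℝ)^2)) * b ^ i) * (γ ^ (i+1) * Real.exp (-(a*γ))) :=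
    fun γ hγ i => mul_nonneg
      (mul_nonneg (mul_nonneg hC (div_nonneg (poch_pos' hm i).le (by positivity))) (by positivity))
      (by positivity)
  -- step 1: expand the series pointwise
  have hpt : ∀ γ ∈ Ioi (0:ℝ),
      ENNReal.ofReal (γ * (C * Real.exp (-(a*γ)) * kummerM m (b*γ)))
        = ∑' i : ℕ, ENNReal.ofReal ((C * (poch m i / ((Nat.factorial i : ℝ)^2)) * b ^ i)
            * (γ ^ (i+1) * Real.exp (-(a*γ)))) := by
    intro γ hγ
    have hγ0 : (0:ℝ) < γ := hγ
    have hK : HasSum (fun i : ℕ => poch m i / ((Nat.factorial i : ℝ)^2) * (b*γ)^i)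
        (kummerM m (b*γ)) := (summable_kummer hm (b*γ)).hasSum
    have hK2 := hK.mul_left (γ * (C * Real.exp (-(a*γ))))
    have hK3 : HasSum (fun i : ℕ => (C * (poch m i / ((Nat.factorial i : ℝ)^2)) * b ^ i)
        * (γ ^ (i+1) * Real.exp (-(a*γ))))
        (γ * (C * Real.exp (-(a*γ))) * kummerM m (b*γ)) := by
      apply hK2.congr_fun
      intro i
      rw [mul_pow]
      ring
    rw [show γ * (C * Real.exp (-(a*γ)) * kummerM m (b*γ))
        = γ * (C * Real.exp (-(a*γ))) * kummerM m (b*γ) by ring, ← hK3.tsum_eq]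
    exact ENNReal.ofReal_tsum_of_nonneg (hterm_nn γ hγ0) hK3.summable
  rw [setLIntegral_congr_fun measurableSet_Ioi hpt]
  -- step 2: swap tsum and lintegral
  rw [lintegral_tsum (f := fun (i : ℕ) (γ : ℝ) =>
      ENNReal.ofReal ((C * (poch m i / ((Nat.factorial i : ℝ)^2)) * b ^ i)
        * (γ ^ (i+1) * Real.exp (-(a*γ)))))
    (fun i => (((measurable_id.pow_const (i+1)).mul
      (Real.measurable_exp.comp (measurable_id.const_mul a).neg)).const_mul _).ennreal_ofReal.aemeasurable)]
  -- step 3: evaluate each integral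
  have hstep3 : ∀ i : ℕ,
      (∫⁻ γ in Ioi (0:ℝ), ENNReal.ofReal ((C * (poch m i / ((Nat.factorial i : ℝ)^2)) * b ^ i)
        * (γ ^ (i+1) * Real.exp (-(a*γ)))))
      = ENNReal.ofReal (C/a^2 * (poch m i * ((i:ℝ)+1) / (Nat.factorial i : ℝ) * (b/a) ^ i)) := by
    intro i
    have hcnn : 0 ≤ C * (poch m i / ((Nat.factorial i : ℝ)^2)) * b ^ i :=
      mul_nonneg (mul_nonneg hC (div_nonneg (poch_pos' hm i).le (by positivity))) (by positivity)
    simp_rw [ENNReal.ofReal_mul hcnn]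
    rw [lintegral_const_mul' _ _ ENNReal.ofReal_ne_top, lintegral_pow_exp (i+1) ha,
      ← ENNReal.ofReal_mul hcnn]
    congr 1
    have h1 : (Nat.factorial (i+1) : ℝ) = ((i:ℝ)+1) * (Nat.factorial i : ℝ) := by
      rw [Nat.factorial_succ]; push_cast; ring
    have h2 : a ^ (i+1+1) = a ^ i * a ^ 2 := by ring
    have h3 : (b/a) ^ i = b ^ i / a ^ i := div_pow b a i
    rw [h1, h2, h3]
    have hai : (0:ℝ) < a ^ i := by positivity
    field_simp
  simp_rw [hstep3]
  -- step 4: sum the series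
  have ht0 : (0:ℝ) ≤ b/a := by positivity
  have ht1 : b/a < 1 := (div_lt_one ha).mpr hba
  have hCa : (0:ℝ) ≤ C/a^2 := by positivity
  calc ∑' i : ℕ, ENNReal.ofReal (C/a^2 * (poch m i * ((i:ℝ)+1) / (Nat.factorial i : ℝ) * (b/a) ^ i))
      = ∑' i : ℕ, ENNReal.ofReal (C/a^2) *
          ENNReal.ofReal (poch m i * ((i:ℝ)+1) / (Nat.factorial i : ℝ) * (b/a) ^ i) := by
        congr 1; funext i; rw [ENNReal.ofReal_mul hCa]
    _ = ENNReal.ofReal (C/a^2) *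
          ∑' i : ℕ, ENNReal.ofReal (poch m i * ((i:ℝ)+1) / (Nat.factorial i : ℝ) * (b/a) ^ i) :=
        ENNReal.tsum_mul_left
    _ = ENNReal.ofReal (C/a^2) * ENNReal.ofReal ((1-b/a) ^ (-m) + m*(b/a)*(1-b/a) ^ (-(m+1))) := by
        rw [tsum_poch_geom hm ht0 ht1]
    _ = ENNReal.ofReal (C/a^2 * ((1-b/a) ^ (-m) + m*(b/a)*(1-b/a) ^ (-(m+1)))) :=
        (ENNReal.ofReal_mul hCa).symm

lemma measurable_kummerM {m : ℝ} (hm : 0 < m) : Measurable (kummerM m) := by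
  apply measurable_of_tendsto_metrizable
    (f := fun n z => ∑ i ∈ Finset.range n, poch m i / ((Nat.factorial i : ℝ) ^ 2) * z ^ i)
  · intro n
    exact Finset.measurable_sum _ fun i _ => (measurable_id.pow_const i).const_mul _
  · rw [tendsto_pi_nhds]
    intro z
    exact ((summable_kummer hm z).hasSum).tendsto_sum_nat

lemma kummerM_nonneg {m : ℝ} (hm : 0 < m) {z : ℝ} (hz : 0 ≤ z) : 0 ≤ kummerM m z :=
  tsum_nonneg fun i => mul_nonneg
    (div_nonneg (poch_pos' hm i).le (by positivity)) (by positivity)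

lemma lintegral_cond {m k γb : ℝ} (hm : 0 < m) (hk : 0 < k) (hγb : 0 < γb)
    {x : ℝ} (hx : 0 < x) :
    ∫⁻ γ in Ioi (0:ℝ), ENNReal.ofReal (γ * condPdf m k γb x γ)
      = ENNReal.ofReal ((k + x) / (k + 1) * γb) := by
  have hkx : 0 < k / x := by positivity
  have hgx : 0 < (k + x) / (k + 1) * γb := by positivity
  set kx : ℝ := k / x with hkxd
  set gx : ℝ := (k + x) / (k + 1) * γb with hgxd
  set a : ℝ := (1 + kx) / gx with had
  set b : ℝ := kx * (1 + kx) / ((kx + m) * gx) with hbd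
  set C : ℝ := (m ^ m * (1 + kx)) / ((m + kx) ^ m * gx) with hCd
  have hmm : (0:ℝ) < m ^ m := Real.rpow_pos_of_pos hm m
  have hpm : (0:ℝ) < (m + kx) ^ m := Real.rpow_pos_of_pos (by positivity) m
  have ha : 0 < a := by rw [had]; positivity
  have hb : 0 < b := by rw [hbd]; positivity
  have hC : 0 ≤ C := by rw [hCd]; positivity
  have hθ : kx / (kx + m) < 1 := (div_lt_one (by positivity)).mpr (by linarith)
  have hbeq : b = a * (kx / (kx + m)) := by
    rw [hbd, had]
    field_simp
  have hba : b < a := by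
    rw [hbeq]
    calc a * (kx / (kx + m)) < a * 1 := by
          apply mul_lt_mul_of_pos_left hθ ha
      _ = a := mul_one a
  have hrw : ∀ γ : ℝ, condPdf m k γb x γ = C * Real.exp (-(a * γ)) * kummerM m (b * γ) := by
    intro γ
    rw [condPdf, ← hkxd, ← hgxd, hCd, had, hbd, neg_mul]
    congr 2
    field_simp
  simp_rw [hrw]
  rw [condMean hm hC ha hb hba]
  congr 1
  have ht : b / a = kx / (kx + m) := by
    rw [hbeq, mul_comm, mul_div_assoc, div_self ha.ne', mul_one]
  have h1t : 1 - b / a = m / (kx + m) := by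
    rw [ht]
    field_simp
    ring
  have hpos : (0:ℝ) < m / (kx + m) := by positivity
  have e1 : (1 - b/a) ^ (-m) = (kx + m) ^ m / m ^ m := by
    rw [h1t, Real.rpow_neg hpos.le, Real.div_rpow hm.le (by positivity), inv_div]
  have e2 : (1 - b/a) ^ (-(m+1)) = ((kx + m) ^ m * (kx + m)) / (m ^ m * m) := by
    rw [h1t, Real.rpow_neg hpos.le, Real.div_rpow hm.le (by positivity), inv_div,
      Real.rpow_add_one (by positivity : (kx + m) ≠ 0), Real.rpow_add_one hm.ne']
  rw [e1, e2, ht, hCd, had]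
  have hmkx : m + kx = kx + m := by ring
  rw [hmkx]
  field_simp

lemma condPdf_nonneg {m k γb : ℝ} (hm : 0 < m) (hk : 0 < k) (hγb : 0 < γb)
    {x γ : ℝ} (hx : 0 < x) (hγ : 0 ≤ γ) : 0 ≤ condPdf m k γb x γ := by
  have h1 : (0:ℝ) < m ^ m := Real.rpow_pos_of_pos hm m
  have h2 : (0:ℝ) < (m + k / x) ^ m := Real.rpow_pos_of_pos (by positivity) m
  have harg : 0 ≤ (k / x) * (1 + k / x) / (k / x + m) * (γ / ((k + x) / (k + 1) * γb)) := by
    positivity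
  have := kummerM_nonneg hm harg
  rw [condPdf]
  positivity

lemma measurable_condPdf {m k γb : ℝ} (hm : 0 < m) :
    Measurable (fun p : ℝ × ℝ => condPdf m k γb p.2 p.1) := by
  unfold condPdf
  apply Measurable.mul
  · fun_prop
  · exact (measurable_kummerM hm).comp (by fun_prop)


end fdRLoSAux

/-- The mean of the fdRLoS instantaneous SNR equals the average SNR `γ̄`. -/
theorem pdfSNR_mean (m k γb : ℝ) (hm : 0 < m) (hk : 0 < k) (hγb : 0 < γb) :
    ∫ γ in Ioi (0 : ℝ), γ * pdfSNR m k γb γ = γb := by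
  have hk1 : (0:ℝ) < k + 1 := by linarith
  set Φ : ℝ × ℝ → ENNReal :=
    fun p => ENNReal.ofReal (p.1 * (condPdf m k γb p.2 p.1 * Real.exp (-p.2))) with hΦd
  have hΦ : Measurable Φ := by
    apply Measurable.ennreal_ofReal
    exact measurable_fst.mul ((measurable_condPdf hm).mul
      (Real.measurable_exp.comp measurable_snd.neg))
  set G : ℝ → ENNReal :=
    fun γ => ∫⁻ x in Ioi (0:ℝ), ENNReal.ofReal (γ * (condPdf m k γb x γ * Real.exp (-x)))
    with hGd
  have hGmeas : Measurable G := by rw [hGd]; exact hΦ.lintegral_prod_right'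
  -- total lintegral computation
  have htotal : ∫⁻ γ in Ioi (0:ℝ), G γ = ENNReal.ofReal γb := by
    rw [hGd]
    rw [lintegral_lintegral_swap hΦ.aemeasurable]
    have hinner : ∀ x ∈ Ioi (0:ℝ),
        (∫⁻ γ in Ioi (0:ℝ), ENNReal.ofReal (γ * (condPdf m k γb x γ * Real.exp (-x))))
          = ENNReal.ofReal ((k * γb / (k+1)) * Real.exp (-x) + (γb / (k+1)) * (x * Real.exp (-x))) := by
      intro x hx
      have hx0 : (0:ℝ) < x := hx
      have hrw : ∀ γ : ℝ, ENNReal.ofReal (γ * (condPdf m k γb x γ * Real.exp (-x)))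
          = ENNReal.ofReal (Real.exp (-x)) * ENNReal.ofReal (γ * condPdf m k γb x γ) := by
        intro γ
        rw [show γ * (condPdf m k γb x γ * Real.exp (-x))
            = Real.exp (-x) * (γ * condPdf m k γb x γ) by ring,
          ENNReal.ofReal_mul (Real.exp_nonneg _)]
      rw [lintegral_congr hrw, lintegral_const_mul' _ _ ENNReal.ofReal_ne_top,
        lintegral_cond hm hk hγb hx0, ← ENNReal.ofReal_mul (Real.exp_nonneg _)]
      congr 1
      field_simp
    rw [setLIntegral_congr_fun measurableSet_Ioi hinner]
    have hsplit : ∀ x ∈ Ioi (0:ℝ),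
        ENNReal.ofReal ((k * γb / (k+1)) * Real.exp (-x) + (γb / (k+1)) * (x * Real.exp (-x)))
        = ENNReal.ofReal (k * γb / (k+1)) * ENNReal.ofReal (x ^ 0 * Real.exp (-(1*x)))
          + ENNReal.ofReal (γb / (k+1)) * ENNReal.ofReal (x ^ 1 * Real.exp (-(1*x))) := by
      intro x hx
      have hx0 : (0:ℝ) < x := hx
      rw [ENNReal.ofReal_add (by positivity) (by positivity),
        ← ENNReal.ofReal_mul (by positivity), ← ENNReal.ofReal_mul (by positivity)]
      norm_num
    rw [setLIntegral_congr_fun measurableSet_Ioi hsplit]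
    rw [lintegral_add_left (f := fun x : ℝ => ENNReal.ofReal (k * γb / (k + 1)) *
      ENNReal.ofReal (x ^ 0 * Real.exp (-(1 * x)))) (by fun_prop)]
    rw [lintegral_const_mul' _ _ ENNReal.ofReal_ne_top,
      lintegral_const_mul' _ _ ENNReal.ofReal_ne_top,
      lintegral_pow_exp 0 one_pos, lintegral_pow_exp 1 one_pos]
    rw [← ENNReal.ofReal_mul (by positivity), ← ENNReal.ofReal_mul (by positivity),
      ← ENNReal.ofReal_add (by positivity) (by positivity)]
    congr 1
    norm_num
    field_simp
  -- relate Bochner integral to lintegral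
  have hpt : ∀ γ ∈ Ioi (0:ℝ), γ * pdfSNR m k γb γ = (G γ).toReal := by
    intro γ hγ
    have hγ0 : (0:ℝ) < γ := hγ
    have h1 : γ * pdfSNR m k γb γ
        = ∫ x in Ioi (0:ℝ), γ * (condPdf m k γb x γ * Real.exp (-x)) := by
      rw [pdfSNR, ← integral_const_mul]
    rw [h1, hGd]
    rw [integral_eq_lintegral_of_nonneg_ae]
    · filter_upwards [self_mem_ae_restrict measurableSet_Ioi] with x hx
      have hx0 : (0:ℝ) < x := hx
      have := condPdf_nonneg hm hk hγb hx0 hγ0.le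
      positivity
    · apply Measurable.aestronglyMeasurable
      exact measurable_const.mul (((measurable_condPdf hm).comp
        (measurable_const.prodMk measurable_id)).mul
        (Real.measurable_exp.comp measurable_id.neg))
  rw [setIntegral_congr_fun measurableSet_Ioi hpt]
  rw [integral_toReal (hGmeas.aemeasurable)]
  · rw [htotal, ENNReal.toReal_ofReal hγb.le]
  · exact ae_lt_top hGmeas (by rw [htotal]; exact ENNReal.ofReal_ne_top)
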